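/- arXiv:2403.05803 — 2 statements merged into one kernel-verified Lean document; each statement's English description precedes it below -/
import Mathlib

section
/- Let c, τ ∈ ℝ. Let μ₀, μ₁ : ℝ → ℝ be continuous functions, and let p : ℝ → ℝ be continuous at every x ≠ c, have a finite left limit at c, and be right-continuous at c. Let C : ℝ → ℝ be continuous at every x ≠ c, have a finite left limit at c, and be right-continuous at c. Assume τ = μ₁(c) − μ₀(c). Then there exist a constant β ∈ ℝ and a continuous function f : ℝ → ℝ such that for all x ∈ ℝ: μ₀(x)(1 − p(x)) + μ₁(x)p(x) + C(x) = τ·p(x) + β·𝟙(x ≥ c) + f(x). -/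
open Filter Set Topology

/-!
Write `μ₀(1 - p) + μ₁ p + C = τ p + μ₀ + (μ₁ - μ₀ - τ) p + C`. The factor `μ₁ - μ₀ - τ` is
continuous and vanishes at `c`, so it cancels the jump of `p` there and `(μ₁ - μ₀ - τ) p` is
continuous. What is left of the discontinuity is the jump of `C` at `c`, of size
`β = C c - C(c⁻)`, and subtracting `β 𝟙(x ≥ c)` removes it.
-/

section Jump

variable {α E : Type*} [TopologicalSpace α] [LinearOrder α]

theorem continuousAt_mul_of_eq_zero_of_one_sided_limits {R : Type*} [TopologicalSpace R]
    [MulZeroClass R] [ContinuousMul R] {a p : α → R} {c : α} {L R₀ : R}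
    (ha : ContinuousAt a c) (ha₀ : a c = 0)
    (hp_left : Tendsto p (𝓝[<] c) (𝓝 L)) (hp_right : Tendsto p (𝓝[≥] c) (𝓝 R₀)) :
    ContinuousAt (fun x => a x * p x) c := by
  have h_left := (ha.mono_left nhdsWithin_le_nhds).mul hp_left
  have h_right := (ha.mono_left nhdsWithin_le_nhds).mul hp_right
  simp only [ha₀, zero_mul] at h_left h_right
  simp only [ContinuousAt, ha₀, zero_mul, ← nhdsLT_sup_nhdsGE, tendsto_sup]
  exact ⟨h_left, h_right⟩

variable [OrderClosedTopology α] [TopologicalSpace E] [AddCommGroup E] [IsTopologicalAddGroup E]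

theorem continuous_sub_indicator_Ici_of_jump {g : α → E} {c : α} {L : E}
    (hg : ∀ x, x ≠ c → ContinuousAt g x) (hg_left : Tendsto g (𝓝[<] c) (𝓝 L))
    (hg_right : ContinuousWithinAt g (Ici c) c) :
    Continuous fun x => g x - (Ici c).indicator (fun _ => g c - L) x := by
  refine continuous_iff_continuousAt.2 fun x => ?_
  rcases lt_trichotomy x c with hx | rfl | hx
  · refine (hg x hx.ne).congr_of_eventuallyEq ?_
    filter_upwards [Iio_mem_nhds hx] with y (hy : y < c)
    rw [indicator_of_notMem (show y ∉ Ici c from not_le.2 hy), sub_zero]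
  · have hval : g x - (Ici x).indicator (fun _ => g x - L) x = L := by simp
    simp only [ContinuousAt, hval, ← nhdsLT_sup_nhdsGE, tendsto_sup]
    constructor
    · refine hg_left.congr' ?_
      filter_upwards [self_mem_nhdsWithin] with y (hy : y < x)
      rw [indicator_of_notMem (show y ∉ Ici x from not_le.2 hy), sub_zero]
    · have := hg_right.tendsto.sub_const (g x - L)
      rw [sub_sub_cancel] at this
      refine this.congr' ?_
      filter_upwards [self_mem_nhdsWithin] with y hy
      rw [indicator_of_mem hy]
  · refine ((hg x hx.ne').sub (continuousAt_const (y := g c - L))).congr_of_eventuallyEq ?_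
    filter_upwards [Ioi_mem_nhds hx] with y (hy : c < y)
    rw [indicator_of_mem (show y ∈ Ici c from hy.le), Pi.sub_apply]

end Jump

theorem stmt0 (c τ : ℝ) (μ₀ μ₁ p C : ℝ → ℝ)
    (hμ₀ : Continuous μ₀) (hμ₁ : Continuous μ₁)
    (hp_cont : ∀ x : ℝ, x ≠ c → ContinuousAt p x)
    (hp_left : ∃ L : ℝ, Tendsto p (nhdsWithin c (Iio c)) (nhds L))
    (hp_right : Tendsto p (nhdsWithin c (Ici c)) (nhds (p c)))
    (hC_cont : ∀ x : ℝ, x ≠ c → ContinuousAt C x)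
    (hC_left : ∃ L : ℝ, Tendsto C (nhdsWithin c (Iio c)) (nhds L))
    (hC_right : Tendsto C (nhdsWithin c (Ici c)) (nhds (C c)))
    (hτ : τ = μ₁ c - μ₀ c) :
    ∃ (β : ℝ) (f : ℝ → ℝ), Continuous f ∧
      ∀ x : ℝ, μ₀ x * (1 - p x) + μ₁ x * p x + C x
        = τ * p x + β * (if c ≤ x then 1 else 0) + f x := by
  obtain ⟨Lp, hLp⟩ := hp_left
  obtain ⟨LC, hLC⟩ := hC_left
  set a : ℝ → ℝ := fun x => μ₁ x - μ₀ x - τ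
  have ha : Continuous a := by fun_prop
  have ha₀ : a c = 0 := by simp [a, hτ]
  have hap : Continuous fun x => a x * p x := by
    refine continuous_iff_continuousAt.2 fun x => ?_
    rcases eq_or_ne x c with rfl | hx
    · exact continuousAt_mul_of_eq_zero_of_one_sided_limits ha.continuousAt ha₀ hLp hp_right
    · exact ha.continuousAt.mul (hp_cont x hx)
  refine ⟨C c - LC, fun x => μ₀ x + a x * p x + (C x - (Ici c).indicator (fun _ => C c - LC) x),
    (hμ₀.add hap).add (continuous_sub_indicator_Ici_of_jump hC_cont hLC hC_right), fun x => ?_⟩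
  simp only [a, indicator_apply, mem_Ici]
  split_ifs <;> ring
end

section
/- Let V, V₀ ∈ ℝ^{n×n} be symmetric positive definite, X ∈ ℝ^{n×p} of full column rank p, and g ∈ ℝⁿ with U = (g, X) ∈ ℝ^{n×(p+1)} of full column rank. Define H = X(XᵀV⁻¹X)⁻¹XᵀV⁻¹, S = V⁻¹(I − H), Ω = V⁻¹V₀V⁻¹, and R = Ω − ΩH − HᵀΩ + HᵀΩH. Then e₁ᵀ(UᵀV⁻¹U)⁻¹(UᵀV⁻¹V₀V⁻¹U)(UᵀV⁻¹U)⁻¹e₁ = (gᵀRg)/(gᵀSg)², where e₁ is the first standard basis vector of ℝ^{p+1}. -/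
/-!
Put `M = XᵀV⁻¹X` and `w = (1, -M⁻¹XᵀV⁻¹g)`. Then `Uw = (I - H)g`, and since `XᵀV⁻¹(I - H) = 0`
this gives `(UᵀV⁻¹U)w = (gᵀSg)e₁`. Hence `(UᵀV⁻¹U)⁻¹e₁ = w / gᵀSg`, so the `(1,1)` entry of the
sandwich is `wᵀ(UᵀΩU)w / (gᵀSg)² = ((I - H)g)ᵀΩ(I - H)g / (gᵀSg)² = gᵀRg / (gᵀSg)²`.
-/

open Matrix

namespace Matrix

variable {m n K : Type*} [Fintype n]

theorem mulVec_injective_of_rank_eq_card [Field K] {A : Matrix m n K}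
    (h : A.rank = Fintype.card n) : Function.Injective A.mulVec :=
  mulVec_injective_iff.2 <|
    linearIndependent_iff_card_eq_finrank_span.2 (h.symm.trans A.rank_eq_finrank_span_cols)

theorem dotProduct_transpose_mul_mul_mulVec [Fintype m] [CommSemiring K] (A : Matrix m n K)
    (B : Matrix m m K) (x : n → K) :
    x ⬝ᵥ (Aᵀ * B * A) *ᵥ x = (A *ᵥ x) ⬝ᵥ B *ᵥ (A *ᵥ x) := by
  rw [← mulVec_mulVec, ← mulVec_mulVec, dotProduct_mulVec, vecMul_transpose]

theorem transpose_mul_mul_glsHat [Fintype m] [CommRing K] [DecidableEq n] (X : Matrix m n K)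
    (W : Matrix m m K) (hM : IsUnit (Xᵀ * W * X).det) :
    Xᵀ * W * (X * (Xᵀ * W * X)⁻¹ * Xᵀ * W) = Xᵀ * W := by
  calc Xᵀ * W * (X * (Xᵀ * W * X)⁻¹ * Xᵀ * W)
      = (Xᵀ * W * X) * (Xᵀ * W * X)⁻¹ * (Xᵀ * W) := by simp only [Matrix.mul_assoc]
    _ = Xᵀ * W := by rw [mul_nonsing_inv _ hM, Matrix.one_mul]

theorem inv_mul_mul_inv_apply_of_mulVec_eq_single [Field K] [DecidableEq n]
    {A : Matrix n n K} (hA : IsUnit A.det) (hAt : Aᵀ = A) (B : Matrix n n K)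
    {w : n → K} (hw : w ≠ 0) {i : n} {s : K} (hAw : A *ᵥ w = Pi.single i s) :
    (A⁻¹ * B * A⁻¹) i i = (w ⬝ᵥ B *ᵥ w) / s ^ 2 := by
  have hs : s ≠ 0 := by
    rintro rfl
    exact hw (mulVec_injective_of_isUnit ((isUnit_iff_isUnit_det A).2 hA)
      (by rw [hAw, Pi.single_zero, mulVec_zero]))
  have hAinv : A⁻¹ *ᵥ Pi.single i 1 = s⁻¹ • w := by
    rw [← inv_mul_cancel₀ hs, ← smul_eq_mul, Pi.single_smul', mulVec_smul, ← hAw,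
      mulVec_mulVec, nonsing_inv_mul _ hA, one_mulVec]
  have hAinvt : A⁻¹ᵀ = A⁻¹ := by rw [transpose_nonsing_inv, hAt]
  calc (A⁻¹ * B * A⁻¹) i i = Pi.single i 1 ⬝ᵥ (A⁻¹ᵀ * B * A⁻¹) *ᵥ Pi.single i 1 := by
        simp [hAinvt, single_dotProduct]
    _ = (w ⬝ᵥ B *ᵥ w) / s ^ 2 := by
        rw [dotProduct_transpose_mul_mul_mulVec, hAinv, mulVec_smul, smul_dotProduct,
          dotProduct_smul, smul_eq_mul, smul_eq_mul]
        field_simp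

section Bordered

variable {k : ℕ} [CommSemiring K] (g : m → K) (X : Matrix m (Fin k) K)

theorem of_cons_mulVec_cons (a : K) (v : Fin k → K) :
    (of fun i => Fin.cons (g i) (X i) : Matrix m (Fin (k + 1)) K) *ᵥ Fin.cons a v
      = a • g + X *ᵥ v := by
  ext i
  simp [mulVec, dotProduct, Fin.sum_univ_succ, mul_comm]

theorem transpose_of_cons_mulVec [Fintype m] (y : m → K) :
    (of fun i => Fin.cons (g i) (X i) : Matrix m (Fin (k + 1)) K)ᵀ *ᵥ y
      = Fin.cons (g ⬝ᵥ y) (Xᵀ *ᵥ y) := by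
  ext j
  refine Fin.cases ?_ (fun j => ?_) j <;> simp [mulVec, dotProduct]

end Bordered

end Matrix

theorem stmt13_general (n p : ℕ) (V V₀ : Matrix (Fin n) (Fin n) ℝ)
    (hV : V.PosDef)
    (X : Matrix (Fin n) (Fin p) ℝ) (hX : X.rank = p) (g : Fin n → ℝ)
    (U : Matrix (Fin n) (Fin (p + 1)) ℝ)
    (hUdef : U = Matrix.of fun i => Fin.cons (g i) (X i))
    (hU : U.rank = p + 1)
    (H S Om R : Matrix (Fin n) (Fin n) ℝ)
    (hH : H = X * (Xᵀ * V⁻¹ * X)⁻¹ * Xᵀ * V⁻¹)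
    (hS : S = V⁻¹ * (1 - H))
    (hOm : Om = V⁻¹ * V₀ * V⁻¹)
    (hR : R = Om - Om * H - Hᵀ * Om + Hᵀ * Om * H) :
    ((Uᵀ * V⁻¹ * U)⁻¹ * (Uᵀ * V⁻¹ * V₀ * V⁻¹ * U) * (Uᵀ * V⁻¹ * U)⁻¹) 0 0 =
      (g ⬝ᵥ R.mulVec g) / (g ⬝ᵥ S.mulVec g) ^ 2 := by
  have hM : (Xᵀ * V⁻¹ * X).PosDef := by
    simpa using hV.inv.conjTranspose_mul_mul_same
      (mulVec_injective_of_rank_eq_card (hX.trans (Fintype.card_fin p).symm))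
  have hA : (Uᵀ * V⁻¹ * U).PosDef := by
    simpa using hV.inv.conjTranspose_mul_mul_same
      (mulVec_injective_of_rank_eq_card (hU.trans (Fintype.card_fin _).symm))
  set w : Fin (p + 1) → ℝ := Fin.cons 1 (-((Xᵀ * V⁻¹ * X)⁻¹ * Xᵀ * V⁻¹) *ᵥ g)
  have hUw : U *ᵥ w = (1 - H) *ᵥ g := by
    rw [hUdef, of_cons_mulVec_cons, one_smul, sub_mulVec, one_mulVec, neg_mulVec, mulVec_neg,
      mulVec_mulVec, hH, sub_eq_add_neg]
    simp only [Matrix.mul_assoc]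
  have hXS : Xᵀ * S = 0 := by
    rw [hS, ← Matrix.mul_assoc, Matrix.mul_sub, Matrix.mul_one, hH,
      transpose_mul_mul_glsHat X V⁻¹ hM.det_pos.ne'.isUnit, sub_self]
  have hAw : (Uᵀ * V⁻¹ * U) *ᵥ w = Pi.single 0 (g ⬝ᵥ S *ᵥ g) := by
    rw [← mulVec_mulVec, hUw, ← mulVec_mulVec, mulVec_mulVec _ V⁻¹, ← hS, hUdef,
      transpose_of_cons_mulVec, mulVec_mulVec, hXS, zero_mulVec]
    ext j
    refine Fin.cases ?_ (fun j => ?_) j <;> simp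
  have hR' : R = (1 - H)ᵀ * Om * (1 - H) := by
    rw [hR, transpose_sub, transpose_one]
    noncomm_ring
  have hUOmU : Uᵀ * V⁻¹ * V₀ * V⁻¹ * U = Uᵀ * Om * U := by
    rw [hOm]; simp only [Matrix.mul_assoc]
  rw [inv_mul_mul_inv_apply_of_mulVec_eq_single hA.det_pos.ne'.isUnit ?_ _ ?_ hAw, hUOmU,
    dotProduct_transpose_mul_mul_mulVec, hUw, hR', dotProduct_transpose_mul_mul_mulVec]
  · simpa using hA.1.eq
  · intro hw0
    simpa [w] using congrFun hw0 0

theorem stmt13 (n p : ℕ) (V V₀ : Matrix (Fin n) (Fin n) ℝ)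
    (hV : V.PosDef) (hV₀ : V₀.PosDef)
    (X : Matrix (Fin n) (Fin p) ℝ) (hX : X.rank = p) (g : Fin n → ℝ)
    (U : Matrix (Fin n) (Fin (p + 1)) ℝ)
    (hUdef : U = Matrix.of fun i => Fin.cons (g i) (X i))
    (hU : U.rank = p + 1)
    (H S Om R : Matrix (Fin n) (Fin n) ℝ)
    (hH : H = X * (Xᵀ * V⁻¹ * X)⁻¹ * Xᵀ * V⁻¹)
    (hS : S = V⁻¹ * (1 - H))
    (hOm : Om = V⁻¹ * V₀ * V⁻¹)
    (hR : R = Om - Om * H - Hᵀ * Om + Hᵀ * Om * H) :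
    ((Uᵀ * V⁻¹ * U)⁻¹ * (Uᵀ * V⁻¹ * V₀ * V⁻¹ * U) * (Uᵀ * V⁻¹ * U)⁻¹) 0 0 =
      (g ⬝ᵥ R.mulVec g) / (g ⬝ᵥ S.mulVec g) ^ 2 :=
  stmt13_general n p V V₀ hV X hX g U hUdef hU H S Om R hH hS hOm hR
end
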